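/- Let D be a digraph with arc set A and vertices s, t. If there is a directed walk from s to t traversing every arc of A, then there is a directed path P from s to t in D such that every arc of A not on P belongs to a strongly connected subdigraph of D containing a vertex of P. -/

import Mathlib

/-- `w` is a directed walk from `s` to `t` in the digraph with arc relation `A`. -/
def DWalkFromTo {V : Type*} (A : V → V → Prop) (w : List V) (s t : V) : Prop :=
  w.Chain' A ∧ w.head? = some s ∧ w.getLast? = some t

/-- The list of arcs (steps) traversed by a walk `w`. -/
def steps {V : Type*} (w : List V) : List (V × V) := w.zip w.tail

/-- The subdigraph induced on `S` is strongly connected: any two vertices of `S`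
are joined by a directed walk staying inside `S`. -/
def StrongConnOn {V : Type*} (A : V → V → Prop) (S : Set V) : Prop :=
  ∀ u ∈ S, ∀ v ∈ S, ∃ w : List V, DWalkFromTo A w u v ∧ ∀ x ∈ w, x ∈ S

/-! Erase loops from the walk, scanning it from its end. Prepending a vertex `x` to the path `p`
built for the rest of the walk either extends `p` or, when `x` already lies on `p`, closes a cycle
through `x`, which is cut off. Everything cut off therefore lies on a closed walk through a vertex
that stays on the path, so every arc of the walk that is not on the final path lies in the strong
component of a path vertex. -/

open Relation

section

variable {V : Type*} {A : V → V → Prop}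

theorem steps_cons_cons (a b : V) (l : List V) : steps (a :: b :: l) = (a, b) :: steps (b :: l) :=
  rfl

theorem steps_cons_of_head?_eq {x y : V} {l : List V} (h : l.head? = some y) :
    steps (x :: l) = (x, y) :: steps l := by
  cases l with
  | nil => simp at h
  | cons b l =>
    obtain rfl : b = y := by simpa using h
    rfl

theorem mem_of_mem_steps {u v : V} {l : List V} (h : (u, v) ∈ steps l) : u ∈ l ∧ v ∈ l :=
  have h' := List.of_mem_zip h
  ⟨h'.1, List.mem_of_mem_tail h'.2⟩

theorem steps_append_cons (x : V) (l₁ l₂ : List V) :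
    steps (l₁ ++ x :: l₂) = steps (l₁ ++ [x]) ++ steps (x :: l₂) := by
  induction l₁ with
  | nil => rfl
  | cons a l ih =>
    cases l with
    | nil => rfl
    | cons b l =>
      simp only [List.cons_append, steps_cons_cons] at ih ⊢
      rw [ih]

namespace DWalkFromTo

variable {w : List V} {a b : V}

theorem reflTransGen_of_mem (h : DWalkFromTo A w a b) {y : V} (hy : y ∈ w) :
    ReflTransGen A a y ∧ ReflTransGen A y b := by
  obtain ⟨hc, ha, hb⟩ := h
  obtain ⟨w, rfl⟩ := List.head?_eq_some_iff.1 ha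
  refine ⟨hc.induction (ReflTransGen A a ·) _ (fun _ _ h₁ h₂ => h₂.tail h₁) (fun _ => .refl) y hy,
    hc.backwards_induction (ReflTransGen A · b) _ (fun _ _ h₁ h₂ => h₂.head h₁) (fun hne => ?_) y hy⟩
  rw [List.getLast?_eq_some_getLast hne, Option.some_inj] at hb
  exact hb ▸ .refl

theorem _root_.Relation.ReflTransGen.exists_dWalkFromTo (h : ReflTransGen A a b) :
    ∃ w, DWalkFromTo A w a b := by
  obtain ⟨l, hc, hl⟩ := List.exists_isChain_cons_of_relationReflTransGen h
  exact ⟨a :: l, hc, rfl, by rw [List.getLast?_eq_some_getLast (List.cons_ne_nil _ _), hl]⟩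

theorem cons {x : V} (hxa : A x a) (h : DWalkFromTo A w a b) : DWalkFromTo A (x :: w) x b := by
  obtain ⟨hc, ha, hb⟩ := h
  obtain ⟨w, rfl⟩ := List.head?_eq_some_iff.1 ha
  exact ⟨hc.cons_cons hxa, rfl, by rwa [List.getLast?_cons_cons]⟩

theorem of_append_cons_left {l₁ l₂ : List V} {x : V} (h : DWalkFromTo A (l₁ ++ x :: l₂) a b) :
    DWalkFromTo A (l₁ ++ [x]) a x := by
  obtain ⟨hc, ha, -⟩ := h
  refine ⟨(List.isChain_split.1 hc).1, ?_, List.getLast?_concat⟩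
  rw [List.head?_append] at ha ⊢
  exact ha

theorem of_append_cons_right {l₁ l₂ : List V} {x : V} (h : DWalkFromTo A (l₁ ++ x :: l₂) a b) :
    DWalkFromTo A (x :: l₂) x b := by
  obtain ⟨hc, -, hb⟩ := h
  exact ⟨(List.isChain_split.1 hc).2, rfl, List.getLast?_append_cons _ _ _ ▸ hb⟩

end DWalkFromTo

variable (A) in
theorem strongConnOn_setOf_reflTransGen (u : V) :
    StrongConnOn A {z | ReflTransGen A u z ∧ ReflTransGen A z u} := by
  intro z₁ hz₁ z₂ hz₂
  obtain ⟨w, hw⟩ := (hz₁.2.trans hz₂.1).exists_dWalkFromTo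
  refine ⟨w, hw, fun y hy => ?_⟩
  obtain ⟨h₁, h₂⟩ := hw.reflTransGen_of_mem hy
  exact ⟨hz₁.1.trans h₁, h₂.trans hz₂.2⟩

variable (A) in
/-- The invariant of loop erasure: what is cut out of the walk `w` to leave `p` lies in strong
components meeting `p`. -/
def IsShortcut (p w : List V) : Prop :=
  (∀ y ∈ w, ∃ x ∈ p, ReflTransGen A x y ∧ ReflTransGen A y x) ∧
    ∀ u v, (u, v) ∈ steps w → (u, v) ∉ steps p → ReflTransGen A v u

variable (A) in
theorem isShortcut_self (w : List V) : IsShortcut A w w :=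
  ⟨fun y hy => ⟨y, hy, .refl, .refl⟩, fun _ _ h h' => absurd h h'⟩

namespace IsShortcut

variable {p w : List V} {x y : V}

theorem cons (hp : p.head? = some y) (h : IsShortcut A p (y :: w)) :
    IsShortcut A (x :: p) (x :: y :: w) := by
  obtain ⟨hvert, hstep⟩ := h
  refine ⟨?_, fun u v huv hnot => ?_⟩
  · rintro z (_ | ⟨_, hz⟩)
    · exact ⟨x, List.mem_cons_self, .refl, .refl⟩
    · obtain ⟨c, hc, hcz, hzc⟩ := hvert z hz
      exact ⟨c, List.mem_cons_of_mem _ hc, hcz, hzc⟩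
  · rw [steps_cons_of_head?_eq hp, List.mem_cons, not_or] at hnot
    rw [steps_cons_cons, List.mem_cons] at huv
    exact hstep u v (huv.resolve_left hnot.1) hnot.2

/-- Prepending `x` to a path through `x` closes the cycle `x → y ⇝ x`, which is cut off. -/
theorem cons_of_mem {p₁ p₂ : List V} {t : V} (hxy : A x y)
    (hp : DWalkFromTo A (p₁ ++ x :: p₂) y t) (h : IsShortcut A (p₁ ++ x :: p₂) (y :: w)) :
    IsShortcut A (x :: p₂) (x :: y :: w) := by
  obtain ⟨hvert, hstep⟩ := h
  have hcyc : ∀ z ∈ p₁ ++ [x], ∀ z' ∈ p₁ ++ [x], ReflTransGen A z z' := fun z hz z' hz' =>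
    ((hp.of_append_cons_left.reflTransGen_of_mem hz).2.tail hxy).trans
      (hp.of_append_cons_left.reflTransGen_of_mem hz').1
  have hx : x ∈ p₁ ++ [x] := List.mem_concat_self
  refine ⟨?_, fun u v huv hnot => ?_⟩
  · rintro z (_ | ⟨_, hz⟩)
    · exact ⟨x, List.mem_cons_self, .refl, .refl⟩
    obtain ⟨c, hc, hcz, hzc⟩ := hvert z hz
    rcases List.mem_append.1 hc with hc | hc
    · exact ⟨x, List.mem_cons_self, (hcyc x hx c (List.mem_append_left _ hc)).trans hcz,
        hzc.trans (hcyc c (List.mem_append_left _ hc) x hx)⟩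
    · exact ⟨c, hc, hcz, hzc⟩
  · rw [steps_cons_cons, List.mem_cons] at huv
    rcases huv with huv | huv
    · obtain ⟨rfl, rfl⟩ := Prod.ext_iff.1 huv
      exact (hp.of_append_cons_left.reflTransGen_of_mem hx).1
    by_cases hup : (u, v) ∈ steps (p₁ ++ x :: p₂)
    · rw [steps_append_cons, List.mem_append] at hup
      obtain ⟨hu, hv⟩ := mem_of_mem_steps (hup.resolve_right hnot)
      exact hcyc v hv u hu
    · exact hstep u v huv hup

end IsShortcut

theorem exists_nodup_isShortcut {w : List V} {s t : V} (hw : DWalkFromTo A w s t) :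
    ∃ p, DWalkFromTo A p s t ∧ p.Nodup ∧ IsShortcut A p w := by
  induction w generalizing s with
  | nil => simp [DWalkFromTo] at hw
  | cons x w ih =>
    obtain ⟨hc, hs, ht⟩ := hw
    obtain rfl : x = s := by simpa using hs
    cases w with
    | nil =>
      obtain rfl : x = t := by simpa using ht
      exact ⟨[x], ⟨hc, hs, ht⟩, List.nodup_singleton x, isShortcut_self A [x]⟩
    | cons y w =>
      obtain ⟨hxy, hc⟩ := List.isChain_cons_cons.1 hc
      obtain ⟨p, hp, hnd, hsc⟩ := ih ⟨hc, rfl, by rwa [List.getLast?_cons_cons] at ht⟩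
      by_cases hx : x ∈ p
      · obtain ⟨p₁, p₂, rfl⟩ := List.append_of_mem hx
        exact ⟨x :: p₂, hp.of_append_cons_right, hnd.of_append_right, hsc.cons_of_mem hxy hp⟩
      · exact ⟨x :: p, hp.cons hxy, List.nodup_cons.2 ⟨hx, hnd⟩, hsc.cons hp.2.1⟩

end

theorem path_with_scc_of_walkable {V : Type*} (A : V → V → Prop)
    (s t : V) (w : List V) (hw : DWalkFromTo A w s t)
    (hall : ∀ u v, A u v → (u, v) ∈ steps w) :
    ∃ p : List V, DWalkFromTo A p s t ∧ p.Nodup ∧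
      ∀ u v, A u v → (u, v) ∉ steps p →
        ∃ S : Set V, u ∈ S ∧ v ∈ S ∧ StrongConnOn A S ∧ ∃ x ∈ S, x ∈ p := by
  obtain ⟨p, hp, hnd, hvert, hstep⟩ := exists_nodup_isShortcut hw
  refine ⟨p, hp, hnd, fun u v huv hnot => ?_⟩
  have huvw := hall u v huv
  obtain ⟨x, hxp, hxu, hux⟩ := hvert u (mem_of_mem_steps huvw).1
  exact ⟨{z | ReflTransGen A u z ∧ ReflTransGen A z u}, ⟨.refl, .refl⟩,
    ⟨.single huv, hstep u v huvw hnot⟩, strongConnOn_setOf_reflTransGen A u, x, ⟨hux, hxu⟩, hxp⟩
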